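/- arXiv:1709.09640 — 6 statements merged into one kernel-verified Lean document; each statement's English description precedes it below -/
import Mathlib

section
/- Let K be a field, E an algebraic field extension of K, and Ω an algebraic closure of E. Let α ∈ E. If for every intermediate field L of K(α)/K with α ∉ L there exist two L-algebra homomorphisms φ, ψ : E → Ω such that φ(α) ≠ ψ(α), then α is separable over K (i.e., the minimal polynomial of α over K has distinct roots in Ω). -/
/-!
Let `q` be the exponential characteristic of `K` and `Kₛ` the separable closure of `K` in `E`.
Since `E / Kₛ` is purely inseparable, `α ^ q ^ n ∈ Kₛ` for some `n`, so `α ^ q ^ n` lies in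
`L = Kₛ ⊓ K(α)`. Every `L`-algebra homomorphism `E → Ω` then sends `α` to the unique `q ^ n`-th
root of the same element of `Ω`, so all of them agree on `α`. The hypothesis forces `α ∈ L ⊆ Kₛ`.
-/

open IntermediateField

theorem AlgHom.apply_eq_of_pow_mem_range {R A B : Type*} [CommSemiring R] [CommRing A]
    [CommRing B] [IsReduced B] [Algebra R A] [Algebra R B] (q : ℕ) [ExpChar B q]
    (φ ψ : A →ₐ[R] B) {x : A} {n : ℕ} (hx : x ^ q ^ n ∈ Set.range (algebraMap R A)) :
    φ x = ψ x := by
  obtain ⟨r, hr⟩ := hx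
  apply iterateFrobenius_inj B q n
  simp only [iterateFrobenius_def, ← map_pow, ← hr, AlgHom.commutes]

theorem exists_pow_mem_separableClosure (K : Type*) {E : Type*} [Field K] [Field E] [Algebra K E]
    [Algebra.IsAlgebraic K E] (q : ℕ) [ExpChar K q] (x : E) :
    ∃ n : ℕ, x ^ q ^ n ∈ separableClosure K E := by
  have : ExpChar (separableClosure K E) q :=
    expChar_of_injective_algebraMap (algebraMap K (separableClosure K E)).injective q
  obtain ⟨n, y, hy⟩ := IsPurelyInseparable.pow_mem (separableClosure K E) q x
  exact ⟨n, hy ▸ y.2⟩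

theorem stmt_1_general {K E Ω : Type*} [Field K] [Field E] [Field Ω]
    [Algebra K E] [Algebra E Ω]
    [Algebra.IsAlgebraic K E] (α : E)
    (h : ∀ L : IntermediateField K E, L ≤ IntermediateField.adjoin K {α} → α ∉ L →
      ∃ φ ψ : E →ₐ[L] Ω, φ α ≠ ψ α) :
    IsSeparable K α := by
  let q := ringExpChar K
  have : ExpChar K q := ringExpChar.expChar K
  have : ExpChar E q := expChar_of_injective_algebraMap (algebraMap K E).injective q
  have : ExpChar Ω q := expChar_of_injective_algebraMap (algebraMap E Ω).injective q
  obtain ⟨n, hn⟩ := exists_pow_mem_separableClosure K q α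
  let L := separableClosure K E ⊓ adjoin K {α}
  have hpow : α ^ q ^ n ∈ L := ⟨hn, pow_mem (mem_adjoin_simple_self K α) _⟩
  by_contra hsep
  obtain ⟨φ, ψ, hne⟩ := h L inf_le_right fun hα ↦ hsep hα.1
  exact hne (φ.apply_eq_of_pow_mem_range q ψ ⟨⟨_, hpow⟩, rfl⟩)

/-- If for every intermediate field `L` of `K(α)/K` with `α ∉ L` there exist two
`L`-algebra homomorphisms `φ ψ : E → Ω` with `φ α ≠ ψ α`, then `α` is separable over `K`. -/
theorem stmt_1 {K E Ω : Type*} [Field K] [Field E] [Field Ω]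
    [Algebra K E] [Algebra K Ω] [Algebra E Ω] [IsScalarTower K E Ω]
    [Algebra.IsAlgebraic K E] [IsAlgClosure E Ω] (α : E)
    (h : ∀ L : IntermediateField K E, L ≤ IntermediateField.adjoin K {α} → α ∉ L →
      ∃ φ ψ : E →ₐ[L] Ω, φ α ≠ ψ α) :
    IsSeparable K α :=
  stmt_1_general α h
end

section
/- Let K be a field, E an algebraic field extension of K, Ω an algebraic closure of E, and α ∈ E. Then α is separable over K if and only if for every intermediate field L of E/K with α ∉ L there exist two L-algebra homomorphisms φ, ψ : E → Ω such that φ(α) ≠ ψ(α). -/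
/-!
If `α` is separable over `L` and `α ∉ L`, its minimal polynomial over `L` has at least two
distinct roots in `Ω`, and every root is the image of `α` under some `L`-embedding `E → Ω`.
Conversely, an inseparable `α` lies outside the separable closure `L` of `K` in `E`, and since
`E / L` is purely inseparable there is only one `L`-embedding `E → Ω`.
-/

open Polynomial

theorem nontrivial_rootSet_minpoly_of_isSeparable {F E Ω : Type*} [Field F] [Field E] [Field Ω]
    [Algebra F E] [Algebra F Ω] [IsAlgClosed Ω] {α : E} (hsep : IsSeparable F α)
    (hα : α ∉ (algebraMap F E).range) : ((minpoly F α).rootSet Ω).Nontrivial := by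
  rw [← Set.nontrivial_coe_sort, ← Fintype.one_lt_card_iff_nontrivial,
    card_rootSet_eq_natDegree hsep (IsAlgClosed.splits _)]
  exact (minpoly.two_le_natDegree_iff hsep.isIntegral).2 hα

theorem exists_algHom_apply_ne_of_isSeparable {F E Ω : Type*} [Field F] [Field E] [Field Ω]
    [Algebra F E] [Algebra F Ω] [Algebra.IsAlgebraic F E] [IsAlgClosed Ω] {α : E}
    (hsep : IsSeparable F α) (hα : α ∉ (algebraMap F E).range) :
    ∃ φ ψ : E →ₐ[F] Ω, φ α ≠ ψ α := by
  have hroots := nontrivial_rootSet_minpoly_of_isSeparable (Ω := Ω) hsep hα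
  rw [← Algebra.IsAlgebraic.range_eval_eq_rootSet_minpoly_of_splits Ω
    (fun _ ↦ IsAlgClosed.splits _)] at hroots
  obtain ⟨_, ⟨φ, rfl⟩, _, ⟨ψ, rfl⟩, hne⟩ := hroots
  exact ⟨φ, ψ, hne⟩

theorem stmt_2_general {K E Ω : Type*} [Field K] [Field E] [Field Ω]
    [Algebra K E] [Algebra E Ω]
    [Algebra.IsAlgebraic K E] [IsAlgClosure E Ω] (α : E) :
    IsSeparable K α ↔
      ∀ L : IntermediateField K E, α ∉ L → ∃ φ ψ : E →ₐ[L] Ω, φ α ≠ ψ α := by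
  have : IsAlgClosed Ω := IsAlgClosure.isAlgClosed E
  refine ⟨fun hsep L hαL ↦ ?_, fun h ↦ ?_⟩
  · have : Algebra.IsAlgebraic L E := .tower_top (K := K) L
    refine exists_algHom_apply_ne_of_isSeparable (hsep.tower_top L) ?_
    rintro ⟨y, rfl⟩
    exact hαL y.2
  · by_contra hsep
    obtain ⟨φ, ψ, hne⟩ := h (separableClosure K E) (mt mem_separableClosure_iff.1 hsep)
    exact hne (congrArg (· α) (Subsingleton.elim φ ψ))

/-- `α ∈ E` is separable over `K` iff for every intermediate field `L` of `E/K` with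
`α ∉ L` there exist two `L`-algebra homomorphisms `φ ψ : E → Ω` with `φ α ≠ ψ α`. -/
theorem stmt_2 {K E Ω : Type*} [Field K] [Field E] [Field Ω]
    [Algebra K E] [Algebra K Ω] [Algebra E Ω] [IsScalarTower K E Ω]
    [Algebra.IsAlgebraic K E] [IsAlgClosure E Ω] (α : E) :
    IsSeparable K α ↔
      ∀ L : IntermediateField K E, α ∉ L → ∃ φ ψ : E →ₐ[L] Ω, φ α ≠ ψ α :=
  stmt_2_general α
end

section
/- Let K be a field, E a separable algebraic field extension of K, and Ω an algebraic closure of E. Let L₁ and L₂ be intermediate fields of E/K. Then L₁ ⊆ L₂ if and only if for every pair of K-algebra homomorphisms φ, ψ : E → Ω, if φ and ψ agree on L₂ then φ and ψ agree on L₁. -/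
/-!
If `x ∈ E` lies outside `L₂`, its minimal polynomial over `L₂` is separable of degree at least two,
so it has two distinct roots in `Ω`; each root is the image of `x` under some `L₂`-embedding
`E → Ω`, and these two embeddings agree on `L₂` but not at `x`.
-/

open Polynomial

theorem exists_algHom_apply_ne_of_notMem_range {F E Ω : Type*} [Field F] [Field E] [Field Ω]
    [Algebra F E] [Algebra F Ω] [IsAlgClosed Ω] [Algebra.IsSeparable F E] {x : E}
    (hx : x ∉ Set.range (algebraMap F E)) : ∃ φ ψ : E →ₐ[F] Ω, φ x ≠ ψ x := by
  have hint : IsIntegral F x := Algebra.IsIntegral.isIntegral x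
  have hdeg : 2 ≤ (minpoly F x).natDegree := (minpoly.two_le_natDegree_iff hint).mpr hx
  have hroots : ((minpoly F x).rootSet Ω).Nontrivial := by
    rw [← Set.nontrivial_coe_sort, ← Fintype.one_lt_card_iff_nontrivial,
      card_rootSet_eq_natDegree (Algebra.IsSeparable.isSeparable F x) (IsAlgClosed.splits _)]
    omega
  rw [← Algebra.IsAlgebraic.range_eval_eq_rootSet_minpoly_of_splits (F := F) Ω
    (fun _ ↦ IsAlgClosed.splits _) x] at hroots
  obtain ⟨_, ⟨φ, rfl⟩, _, ⟨ψ, rfl⟩, hne⟩ := hroots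
  exact ⟨φ, ψ, hne⟩

theorem stmt_3_general {K E Ω : Type*} [Field K] [Field E] [Field Ω]
    [Algebra K E] [Algebra K Ω] [Algebra E Ω] [IsScalarTower K E Ω]
    [Algebra.IsSeparable K E] [IsAlgClosure E Ω]
    (L₁ L₂ : IntermediateField K E) :
    L₁ ≤ L₂ ↔
      ∀ φ ψ : E →ₐ[K] Ω, (∀ x ∈ L₂, φ x = ψ x) → ∀ x ∈ L₁, φ x = ψ x := by
  refine ⟨fun hle φ ψ hagree x hx ↦ hagree x (hle hx), fun h x hx ↦ ?_⟩
  by_contra hxL₂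
  have : Algebra.IsSeparable L₂ E := Algebra.isSeparable_tower_top_of_isSeparable K L₂ E
  have : IsAlgClosed Ω := IsAlgClosure.isAlgClosed E
  obtain ⟨φ, ψ, hne⟩ := exists_algHom_apply_ne_of_notMem_range (F := L₂) (Ω := Ω)
    (x := x) fun ⟨z, hz⟩ ↦ hxL₂ (hz ▸ z.2)
  refine hne (h (φ.restrictScalars K) (ψ.restrictScalars K) (fun z hz ↦ ?_) x hx)
  exact (φ.commutes ⟨z, hz⟩).trans (ψ.commutes ⟨z, hz⟩).symm

/-- For a separable algebraic extension `E/K` with intermediate fields `L₁, L₂`: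
`L₁ ⊆ L₂` iff every pair of `K`-algebra homomorphisms `E → Ω` agreeing on `L₂`
also agrees on `L₁`. -/
theorem stmt_3 {K E Ω : Type*} [Field K] [Field E] [Field Ω]
    [Algebra K E] [Algebra K Ω] [Algebra E Ω] [IsScalarTower K E Ω]
    [Algebra.IsAlgebraic K E] [Algebra.IsSeparable K E] [IsAlgClosure E Ω]
    (L₁ L₂ : IntermediateField K E) :
    L₁ ≤ L₂ ↔
      ∀ φ ψ : E →ₐ[K] Ω, (∀ x ∈ L₂, φ x = ψ x) → ∀ x ∈ L₁, φ x = ψ x :=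
  stmt_3_general L₁ L₂
end

section
/- Let K be a field, E an algebraic field extension of K, and Ω an algebraic closure of E. Suppose that for all intermediate fields L₁, L₂ of E/K, the inclusion L₁ ⊆ L₂ holds if and only if every pair of K-algebra homomorphisms φ, ψ : E → Ω that agree on L₂ also agree on L₁. Then E/K is separable. -/
/-!
`E` is purely inseparable over the separable closure `Eₛ` of `K` in `E`, and purely inseparable
extensions are epimorphisms of fields: two `K`-embeddings of `E` agreeing on `Eₛ` are equal.
The hypothesis, read from right to left with `L₁ = ⊤` and `L₂ = Eₛ`, then gives `E ≤ Eₛ`.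
-/

theorem AlgHom.eq_of_eqOn_separableClosure {K E Ω : Type*} [Field K] [Field E] [CommRing Ω]
    [IsReduced Ω] [Algebra K E] [Algebra K Ω] [Algebra.IsAlgebraic K E] {φ ψ : E →ₐ[K] Ω}
    (hφψ : ∀ x ∈ separableClosure K E, φ x = ψ x) : φ = ψ :=
  AlgHom.coe_ringHom_injective <|
    IsPurelyInseparable.injective_comp_algebraMap (separableClosure K E) E Ω <|
      RingHom.ext fun y ↦ hφψ y y.2

theorem stmt_4_general {K E Ω : Type*} [Field K] [Field E] [Field Ω]
    [Algebra K E] [Algebra K Ω]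
    [Algebra.IsAlgebraic K E]
    (h : ∀ L₁ L₂ : IntermediateField K E,
      L₁ ≤ L₂ ↔
        ∀ φ ψ : E →ₐ[K] Ω, (∀ x ∈ L₂, φ x = ψ x) → ∀ x ∈ L₁, φ x = ψ x) :
    Algebra.IsSeparable K E := by
  rw [← separableClosure.eq_top_iff, eq_top_iff, h]
  rintro φ ψ hφψ x -
  rw [AlgHom.eq_of_eqOn_separableClosure hφψ]

/-- If for all intermediate fields `L₁, L₂` of `E/K`, `L₁ ⊆ L₂` holds iff every pair
of `K`-algebra homomorphisms `E → Ω` agreeing on `L₂` agrees on `L₁`, then `E/K`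
is separable. -/
theorem stmt_4 {K E Ω : Type*} [Field K] [Field E] [Field Ω]
    [Algebra K E] [Algebra K Ω] [Algebra E Ω] [IsScalarTower K E Ω]
    [Algebra.IsAlgebraic K E] [IsAlgClosure E Ω]
    (h : ∀ L₁ L₂ : IntermediateField K E,
      L₁ ≤ L₂ ↔
        ∀ φ ψ : E →ₐ[K] Ω, (∀ x ∈ L₂, φ x = ψ x) → ∀ x ∈ L₁, φ x = ψ x) :
    Algebra.IsSeparable K E :=
  stmt_4_general h
end

section
/- Let K be a field, E a separable algebraic field extension of K, Ω an algebraic closure of E, and α, β ∈ E. Then α ∈ K(β) if and only if for every pair of K-algebra homomorphisms φ, ψ : E → Ω, φ(β) = ψ(β) implies φ(α) = ψ(α). -/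
/-!
Embeddings agreeing on `β` agree on `K(β)`. Conversely, the `K(β)`-embeddings of `E` into `Ω` are
`K`-embeddings agreeing on `β`, so they all agree on `α`. Since the values of these embeddings at
`α` are exactly the roots of the minimal polynomial of `α` over `K(β)`, which is separable, that
polynomial has degree one, i.e. `α ∈ K(β)`.
-/

open IntermediateField Polynomial

theorem algHom_apply_eq_of_mem_adjoin_simple {F E A : Type*} [Field F] [Field E] [Semiring A]
    [Algebra F E] [Algebra F A] {α β : E} (hα : α ∈ F⟮β⟯) {φ ψ : E →ₐ[F] A}
    (hβ : φ β = ψ β) : φ α = ψ α := by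
  have hres : φ.comp F⟮β⟯.val = ψ.comp F⟮β⟯.val :=
    adjoin_algHom_ext F fun x hx ↦ by
      obtain rfl := Set.mem_singleton_iff.mp hx
      exact hβ
  exact DFunLike.congr_fun hres ⟨α, hα⟩

theorem mem_bot_of_forall_algHom_apply_eq {F E A : Type*} [Field F] [Field E] [Field A]
    [Algebra F E] [Algebra F A] [Algebra.IsAlgebraic F E] [IsAlgClosed A] {x : E}
    (hx : IsSeparable F x) (h : ∀ φ ψ : E →ₐ[F] A, φ x = ψ x) :
    x ∈ (⊥ : IntermediateField F E) := by
  have hroots : ((minpoly F x).rootSet A).Subsingleton := by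
    rw [← Algebra.IsAlgebraic.range_eval_eq_rootSet_minpoly]
    rintro _ ⟨φ, rfl⟩ _ ⟨ψ, rfl⟩
    exact h φ ψ
  have hdeg : (minpoly F x).natDegree = 1 := by
    have hcard :=
      card_rootSet_eq_natDegree hx (IsAlgClosed.splits ((minpoly F x).map (algebraMap F A)))
    have := minpoly.natDegree_pos hx.isIntegral
    have : Fintype.card ((minpoly F x).rootSet A) ≤ 1 :=
      Fintype.card_le_one_iff_subsingleton.mpr hroots.coe_sort
    omega
  obtain ⟨y, hy⟩ := minpoly.natDegree_eq_one_iff.mp hdeg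
  exact mem_bot.mpr ⟨y, hy⟩

theorem stmt_5_general {K E Ω : Type*} [Field K] [Field E] [Field Ω]
    [Algebra K E] [Algebra K Ω] [Algebra E Ω] [IsScalarTower K E Ω]
    [Algebra.IsSeparable K E] [IsAlgClosure E Ω]
    (α β : E) :
    α ∈ IntermediateField.adjoin K {β} ↔
      ∀ φ ψ : E →ₐ[K] Ω, φ β = ψ β → φ α = ψ α := by
  refine ⟨fun hα φ ψ hβ ↦ algHom_apply_eq_of_mem_adjoin_simple hα hβ, fun h ↦ ?_⟩
  have : IsAlgClosed Ω := IsAlgClosure.isAlgClosed E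
  have hfix : ∀ φ ψ : E →ₐ[K⟮β⟯] Ω, φ α = ψ α := fun φ ψ ↦
    h (φ.restrictScalars K) (ψ.restrictScalars K) <| by
      have hβ : β = algebraMap K⟮β⟯ E (AdjoinSimple.gen K β) := rfl
      simp only [AlgHom.restrictScalars_apply, hβ, AlgHom.commutes]
  obtain ⟨y, rfl⟩ := mem_bot.mp <|
    mem_bot_of_forall_algHom_apply_eq ((Algebra.IsSeparable.isSeparable K α).tower_top _) hfix
  exact y.2

/-- For a separable algebraic extension `E/K` and `α, β ∈ E`: `α ∈ K(β)` iff for every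
pair of `K`-algebra homomorphisms `φ ψ : E → Ω`, `φ β = ψ β` implies `φ α = ψ α`. -/
theorem stmt_5 {K E Ω : Type*} [Field K] [Field E] [Field Ω]
    [Algebra K E] [Algebra K Ω] [Algebra E Ω] [IsScalarTower K E Ω]
    [Algebra.IsAlgebraic K E] [Algebra.IsSeparable K E] [IsAlgClosure E Ω]
    (α β : E) :
    α ∈ IntermediateField.adjoin K {β} ↔
      ∀ φ ψ : E →ₐ[K] Ω, φ β = ψ β → φ α = ψ α :=
  stmt_5_general α β
end

section
/- Let K be a field, E an algebraic field extension of K, and Ω an algebraic closure of E. Then E/K is separable if and only if for every proper intermediate field L of E/K (i.e., L ≠ E) there exist two distinct L-algebra homomorphisms from E to Ω. -/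
/-! Over a separable extension `E/L`, a unique `L`-embedding into `Ω` would make `E/L` purely
inseparable as well, forcing `E = L`. Conversely, `E` is purely inseparable over the separable
closure of `K` in `E`, so the `separableClosure K E`-embeddings of `E` into `Ω` are unique and the
hypothesis forces `separableClosure K E = E`. -/

section Embeddings

variable {F E : Type*} (Ω : Type*) [Field F] [Field E] [Field Ω]
  [Algebra F E] [Algebra F Ω] [IsAlgClosed Ω]

theorem isPurelyInseparable_of_subsingleton_algHom [Algebra.IsAlgebraic F E]
    [Subsingleton (E →ₐ[F] Ω)] : IsPurelyInseparable F E := by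
  have : Nonempty (E →ₐ[F] Ω) := ⟨IsAlgClosed.lift⟩
  apply isPurelyInseparable_of_finSepDegree_eq_one
  rw [Field.finSepDegree_eq_of_isAlgClosed F E Ω, Nat.card_unique]

theorem exists_algHom_ne_of_isSeparable [Algebra.IsSeparable F E]
    (h : ¬ Function.Surjective (algebraMap F E)) : ∃ φ ψ : E →ₐ[F] Ω, φ ≠ ψ := by
  by_contra! hsub
  have : Subsingleton (E →ₐ[F] Ω) := ⟨hsub⟩
  have : IsPurelyInseparable F E := isPurelyInseparable_of_subsingleton_algHom Ω
  exact h (IsPurelyInseparable.surjective_algebraMap_of_isSeparable F E)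

end Embeddings

theorem IntermediateField.eq_top_of_surjective_algebraMap {K E : Type*} [Field K] [Field E]
    [Algebra K E] {L : IntermediateField K E} (h : Function.Surjective (algebraMap L E)) :
    L = ⊤ :=
  eq_top_iff.2 fun x _ ↦ by
    obtain ⟨y, rfl⟩ := h x
    exact y.2

theorem stmt_6_general {K E Ω : Type*} [Field K] [Field E] [Field Ω]
    [Algebra K E] [Algebra E Ω]
    [Algebra.IsAlgebraic K E] [IsAlgClosure E Ω] :
    Algebra.IsSeparable K E ↔
      ∀ L : IntermediateField K E, L ≠ ⊤ → ∃ φ ψ : E →ₐ[L] Ω, φ ≠ ψ := by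
  have : IsAlgClosed Ω := IsAlgClosure.isAlgClosed E
  refine ⟨fun _ L hL ↦ ?_, fun h ↦ ?_⟩
  · have : Algebra.IsSeparable L E := Algebra.isSeparable_tower_top_of_isSeparable K L E
    exact exists_algHom_ne_of_isSeparable Ω
      (mt IntermediateField.eq_top_of_surjective_algebraMap hL)
  · rw [← separableClosure.eq_top_iff]
    by_contra hL
    obtain ⟨φ, ψ, hne⟩ := h (separableClosure K E) hL
    exact hne (Subsingleton.elim φ ψ)

/-- An algebraic extension `E/K` is separable iff for every proper intermediate field `L`
of `E/K` there exist two distinct `L`-algebra homomorphisms from `E` to `Ω`. -/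
theorem stmt_6 {K E Ω : Type*} [Field K] [Field E] [Field Ω]
    [Algebra K E] [Algebra K Ω] [Algebra E Ω] [IsScalarTower K E Ω]
    [Algebra.IsAlgebraic K E] [IsAlgClosure E Ω] :
    Algebra.IsSeparable K E ↔
      ∀ L : IntermediateField K E, L ≠ ⊤ → ∃ φ ψ : E →ₐ[L] Ω, φ ≠ ψ :=
  stmt_6_general
end
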